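/- For all integers s ≥ 1 and d ≥ 0, one has c_{s,d} + c_{s,d+1} = dim_{𝔽₂} Γ̃_{s,d+1} = binomial(d, s−1), where c_{s,d} = dim_{𝔽₂} Δ(0)_{s,d}. -/

import Mathlib

noncomputable section

abbrev Gam : Type := FreeAlgebra (ZMod 2) {k : ℕ // 1 ≤ k}

/-- The canonical generators γ_j, j ≥ 1 (γ_j := 0 for j = 0, never used). -/
def γ (j : ℕ) : Gam :=
  if h : 1 ≤ j then FreeAlgebra.ι (ZMod 2) (⟨j, h⟩ : {k : ℕ // 1 ≤ k}) else 0

/-- Γ̃_{s,d}: the 𝔽₂-span of the monomials of length s and degree d. -/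
def GammaSD (s d : ℕ) : Submodule (ZMod 2) Gam :=
  Submodule.span (ZMod 2)
    {x | ∃ L : List ℕ, (∀ i ∈ L, 1 ≤ i) ∧ L.length = s ∧ L.sum = d ∧ x = (L.map γ).prod}

/-- c_{s,d} = dim_{𝔽₂} Δ(0)_{s,d}, where Δ(0)_{s,d} = ker(Sq¹) ∩ Γ̃_{s,d}. -/
def cdim (Sq1 : Gam →ₗ[ZMod 2] Gam) (s d : ℕ) : ℕ :=
  Module.finrank (ZMod 2) ↥(LinearMap.ker Sq1 ⊓ GammaSD s d)

namespace CdimAux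

abbrev F : Type := ZMod 2
abbrev X : Type := {k : ℕ // 1 ≤ k}

abbrev B : Module.Basis (FreeMonoid X) F Gam := FreeAlgebra.basisFreeMonoid F X

/-- monomial attached to a list of generators -/
def mon (M : List X) : Gam := (M.map (FreeAlgebra.ι F)).prod

lemma γ_def (j : ℕ) (h : 1 ≤ j) : γ j = FreeAlgebra.ι F (⟨j, h⟩ : X) := dif_pos h

lemma γ_eq (a : X) : γ a.1 = FreeAlgebra.ι F a := by
  rw [γ_def a.1 a.2]

@[simp] lemma mon_nil : mon ([] : List X) = 1 := rfl

lemma mon_cons (a : X) (t : List X) : mon (a :: t) = γ a.1 * mon t := by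
  rw [γ_eq]; simp [mon]

lemma e_prod (L : List X) :
    (FreeAlgebra.equivMonoidAlgebraFreeMonoid (R := F) (X := X)) (mon L)
      = MonoidAlgebra.single (FreeMonoid.ofList L) 1 := by
  induction L with
  | nil =>
      simp only [mon_nil, map_one, MonoidAlgebra.one_def]
      rfl
  | cons a t ih =>
      have h1 : mon (a :: t) = FreeAlgebra.ι F a * mon t := by simp [mon]
      rw [h1, map_mul, ih]
      have h2 : (FreeAlgebra.equivMonoidAlgebraFreeMonoid (R := F) (X := X))
          (FreeAlgebra.ι F a) = MonoidAlgebra.single (FreeMonoid.of a) 1 := by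
        show (FreeAlgebra.lift F fun x : X =>
            (MonoidAlgebra.of F (FreeMonoid X)) (FreeMonoid.of x)) (FreeAlgebra.ι F a)
          = MonoidAlgebra.single (FreeMonoid.of a) 1
        rw [FreeAlgebra.lift_ι_apply]
        rfl
      rw [h2, MonoidAlgebra.single_mul_single, one_mul]
      rfl

lemma B_ofList (L : List X) : B (FreeMonoid.ofList L) = mon L := by
  have : B (FreeMonoid.ofList L) =
      (FreeAlgebra.equivMonoidAlgebraFreeMonoid (R := F) (X := X)).symm
        (MonoidAlgebra.single (FreeMonoid.ofList L) 1) := by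
    simp [B, FreeAlgebra.basisFreeMonoid, Module.Basis.map_apply]
  rw [this, ← e_prod, AlgEquiv.symm_apply_apply]

lemma B_toList (w : FreeMonoid X) : B w = mon (FreeMonoid.toList w) := by
  conv_lhs => rw [← FreeMonoid.ofList_toList w]
  exact B_ofList _

/-- the generating set of `GammaSD`, rephrased with lists of subtype elements -/
def S (s d : ℕ) : Set Gam :=
  {x | ∃ M : List X, M.length = s ∧ (M.map Subtype.val).sum = d ∧ x = mon M}

lemma GammaSD_eq (s d : ℕ) : GammaSD s d = Submodule.span F (S s d) := by
  unfold GammaSD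
  congr 1
  ext x
  constructor
  · rintro ⟨L, hpos, hlen, hsum, rfl⟩
    refine ⟨L.attach.map (fun i => (⟨i.1, hpos i.1 i.2⟩ : X)), ?_, ?_, ?_⟩
    · simp [hlen]
    · rw [List.map_map]
      simpa using hsum
    · unfold mon
      rw [List.map_map]
      conv_lhs => rw [← List.attach_map_subtype_val L, List.map_map]
      congr 1
      apply List.map_congr_left
      intro a _
      simp only [Function.comp_apply]
      rw [γ_def a.1 (hpos a.1 a.2)]
  · rintro ⟨M, hlen, hsum, rfl⟩
    refine ⟨M.map Subtype.val, ?_, by simpa using hlen, hsum, ?_⟩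
    · intro i hi
      obtain ⟨a, _, rfl⟩ := List.mem_map.mp hi
      exact a.2
    · unfold mon
      rw [List.map_map]
      congr 1
      apply List.map_congr_left
      intro a _
      simp only [Function.comp_apply]
      rw [γ_eq]

lemma mon_mem (M : List X) : mon M ∈ GammaSD M.length ((M.map Subtype.val).sum) := by
  rw [GammaSD_eq]
  exact Submodule.subset_span ⟨M, rfl, rfl, rfl⟩

lemma two_eq_zero (x : Gam) : x + x = 0 := by
  have h : (2 : F) • x = 0 := by
    rw [show (2 : F) = 0 from rfl, zero_smul]
  rwa [two_smul] at h

section WithSq1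

variable (Sq1 : Gam →ₗ[ZMod 2] Gam)
  (hmul : ∀ x y : Gam, Sq1 (x * y) = x * Sq1 y + Sq1 x * y)
  (hγ : ∀ j : ℕ, 1 ≤ j → Sq1 (γ j) = if j % 2 = 0 then γ (j - 1) else 0)

include hmul in
lemma Sq1_one : Sq1 1 = 0 := by
  have h := hmul 1 1
  simp only [one_mul, mul_one] at h
  have : Sq1 1 + 0 = Sq1 1 + Sq1 1 := by rw [add_zero]; exact h
  exact (add_left_cancel this).symm

include hγ in
lemma Sq1_γ_odd (j : ℕ) (hj : j % 2 = 1) : Sq1 (γ j) = 0 := by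
  have h := hγ j (by omega)
  simpa [hj] using h

include hγ in
lemma Sq1_γ_even (j : ℕ) (h1 : 1 ≤ j) (hj : j % 2 = 0) : Sq1 (γ j) = γ (j - 1) := by
  have h := hγ j h1
  simpa [hj] using h

/-- the contracting homotopy -/
def hfun : List X → Gam
  | [] => 0
  | a :: t => if a.1 % 2 = 1 then mon (⟨a.1 + 1, by omega⟩ :: t) else 0

def H : Gam →ₗ[F] Gam := B.constr F (fun w => hfun (FreeMonoid.toList w))

lemma H_mon (M : List X) : H (mon M) = hfun M := by
  rw [← B_ofList, H, Module.Basis.constr_basis, FreeMonoid.toList_ofList]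

lemma H_mul_odd (j : ℕ) (hj : j % 2 = 1) (x : Gam) :
    H (γ j * x) = γ (j + 1) * x := by
  have h1 : 1 ≤ j := by omega
  have key : H ∘ₗ LinearMap.mulLeft F (γ j) = LinearMap.mulLeft F (γ (j + 1)) := by
    apply B.ext
    intro w
    simp only [LinearMap.comp_apply, LinearMap.mulLeft_apply]
    rw [B_toList, γ_def j h1,
      show FreeAlgebra.ι F (⟨j, h1⟩ : X) * mon (FreeMonoid.toList w)
        = mon (⟨j, h1⟩ :: FreeMonoid.toList w) by simp [mon]]
    rw [H_mon]
    simp only [hfun, hj, if_true]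
    rw [show mon ((⟨j + 1, by omega⟩ : X) :: FreeMonoid.toList w)
        = FreeAlgebra.ι F (⟨j + 1, by omega⟩ : X) * mon (FreeMonoid.toList w) by simp [mon]]
    rw [γ_def (j + 1) (by omega)]
  exact DFunLike.congr_fun key x

lemma H_mul_even (j : ℕ) (h1 : 1 ≤ j) (hj : j % 2 = 0) (x : Gam) :
    H (γ j * x) = 0 := by
  have key : H ∘ₗ LinearMap.mulLeft F (γ j) = (0 : Gam →ₗ[F] Gam) := by
    apply B.ext
    intro w
    simp only [LinearMap.comp_apply, LinearMap.mulLeft_apply, LinearMap.zero_apply]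
    rw [B_toList, γ_def j h1,
      show FreeAlgebra.ι F (⟨j, h1⟩ : X) * mon (FreeMonoid.toList w)
        = mon (⟨j, h1⟩ :: FreeMonoid.toList w) by simp [mon]]
    rw [H_mon]
    simp only [hfun]
    rw [if_neg (by omega)]
  exact DFunLike.congr_fun key x

lemma mul_ι_mem (a : X) (s e : ℕ) (x : Gam) (hx : x ∈ GammaSD s e) :
    FreeAlgebra.ι F a * x ∈ GammaSD (s + 1) (a.1 + e) := by
  have hle : GammaSD s e ≤
      (GammaSD (s + 1) (a.1 + e)).comap (LinearMap.mulLeft F (FreeAlgebra.ι F a)) := by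
    rw [GammaSD_eq s e]
    rw [Submodule.span_le]
    rintro x ⟨M, hlen, hsum, rfl⟩
    simp only [SetLike.mem_coe, Submodule.mem_comap, LinearMap.mulLeft_apply]
    have : FreeAlgebra.ι F a * mon M = mon (a :: M) := by simp [mon]
    rw [this]
    have h2 := mon_mem (a :: M)
    have hl : (a :: M).length = s + 1 := by simp [hlen]
    have hsm : (((a :: M)).map Subtype.val).sum = a.1 + e := by
      simp only [List.map_cons, List.sum_cons, hsum]
    rw [hl, hsm] at h2
    exact h2
  exact hle hx

include hmul hγ in
lemma Sq1_mon_mem : ∀ (M : List X) (d : ℕ), (M.map Subtype.val).sum = d + 1 →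
    Sq1 (mon M) ∈ GammaSD M.length d := by
  intro M
  induction M with
  | nil => intro d hd; simp at hd
  | cons a t ih =>
      intro d hd
      simp only [List.map_cons, List.sum_cons] at hd
      rw [mon_cons, γ_eq, hmul]
      apply Submodule.add_mem
      · -- ι a * Sq1 (mon t)
        rcases Nat.eq_zero_or_pos ((t.map Subtype.val).sum) with h0 | hpos
        · have ht : t = [] := by
            cases t with
            | nil => rfl
            | cons b t' =>
                simp only [List.map_cons, List.sum_cons] at h0
                have := b.2
                omega
          subst ht
          simp only [mon_nil]
          rw [Sq1_one Sq1 hmul, mul_zero]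
          exact Submodule.zero_mem _
        · obtain ⟨e, he⟩ : ∃ e, (t.map Subtype.val).sum = e + 1 :=
            ⟨(t.map Subtype.val).sum - 1, by omega⟩
          have h1 := ih e he
          have h2 := mul_ι_mem a t.length e _ h1
          have hde : a.1 + e = d := by omega
          rw [hde] at h2
          have hl : (a :: t).length = t.length + 1 := rfl
          rw [hl]
          exact h2
      · -- Sq1 (γ a.1) * mon t
        rcases Nat.even_or_odd a.1 with he | ho
        · have hmod : a.1 % 2 = 0 := Nat.even_iff.mp he
          have h2 : 2 ≤ a.1 := by
            have := a.2; omega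
          rw [← γ_eq, Sq1_γ_even Sq1 hγ a.1 a.2 hmod]
          rw [γ_def (a.1 - 1) (by omega)]
          have : FreeAlgebra.ι F (⟨a.1 - 1, by omega⟩ : X) * mon t
              = mon (⟨a.1 - 1, by omega⟩ :: t) := by simp [mon]
          rw [this]
          have h3 := mon_mem ((⟨a.1 - 1, by omega⟩ : X) :: t)
          have hl : ((⟨a.1 - 1, by omega⟩ : X) :: t).length = t.length + 1 := by simp
          have hsum : ((((⟨a.1 - 1, by omega⟩ : X) :: t)).map Subtype.val).sum = d := by
            simp only [List.map_cons, List.sum_cons]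
            omega
          rw [hl, hsum] at h3
          have hl2 : (a :: t).length = t.length + 1 := rfl
          rw [hl2]
          exact h3
        · have hmod : a.1 % 2 = 1 := Nat.odd_iff.mp ho
          rw [← γ_eq, Sq1_γ_odd Sq1 hγ a.1 hmod, zero_mul]
          exact Submodule.zero_mem _

include hmul hγ in
lemma Sq1_mem (s d : ℕ) (x : Gam) (hx : x ∈ GammaSD s (d + 1)) :
    Sq1 x ∈ GammaSD s d := by
  have hle : GammaSD s (d + 1) ≤ (GammaSD s d).comap Sq1 := by
    rw [GammaSD_eq s (d + 1), Submodule.span_le]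
    rintro x ⟨M, hlen, hsum, rfl⟩
    simp only [SetLike.mem_coe, Submodule.mem_comap]
    have := Sq1_mon_mem Sq1 hmul hγ M d hsum
    rwa [hlen] at this
  exact hle hx

include hmul hγ in
lemma Sq1Sq1_mon : ∀ (M : List X), Sq1 (Sq1 (mon M)) = 0 := by
  intro M
  induction M with
  | nil =>
      simp only [mon_nil]
      rw [Sq1_one Sq1 hmul, map_zero]
  | cons a t ih =>
      have hg : Sq1 (Sq1 (γ a.1)) = 0 := by
        rcases Nat.even_or_odd a.1 with he | ho
        · have hmod : a.1 % 2 = 0 := Nat.even_iff.mp he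
          have h2 : 2 ≤ a.1 := by have := a.2; omega
          rw [Sq1_γ_even Sq1 hγ a.1 a.2 hmod]
          exact Sq1_γ_odd Sq1 hγ (a.1 - 1) (by omega)
        · rw [Sq1_γ_odd Sq1 hγ a.1 (Nat.odd_iff.mp ho), map_zero]
      rw [mon_cons, hmul, map_add, hmul, hmul, ih, mul_zero, zero_add, hg, zero_mul,
        add_zero]
      exact two_eq_zero _

include hmul hγ in
lemma Sq1Sq1_mem (s d : ℕ) (x : Gam) (hx : x ∈ GammaSD s d) : Sq1 (Sq1 x) = 0 := by
  have hle : GammaSD s d ≤ LinearMap.ker (Sq1 ∘ₗ Sq1) := by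
    rw [GammaSD_eq, Submodule.span_le]
    rintro x ⟨M, _, _, rfl⟩
    simp only [SetLike.mem_coe, LinearMap.mem_ker, LinearMap.comp_apply]
    exact Sq1Sq1_mon Sq1 hmul hγ M
  simpa using hle hx

lemma H_mem (s d : ℕ) (x : Gam) (hx : x ∈ GammaSD s d) : H x ∈ GammaSD s (d + 1) := by
  have hle : GammaSD s d ≤ (GammaSD s (d + 1)).comap H := by
    rw [GammaSD_eq s d, Submodule.span_le]
    rintro x ⟨M, hlen, hsum, rfl⟩
    simp only [SetLike.mem_coe, Submodule.mem_comap]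
    rw [H_mon]
    cases M with
    | nil => simp only [hfun]; exact Submodule.zero_mem _
    | cons a t =>
        by_cases hp : a.1 % 2 = 1
        · simp only [hfun, hp, if_true]
          have h3 := mon_mem ((⟨a.1 + 1, by omega⟩ : X) :: t)
          have hl : ((⟨a.1 + 1, by omega⟩ : X) :: t).length = s := by
            simpa using hlen
          have hsum' : ((((⟨a.1 + 1, by omega⟩ : X) :: t)).map Subtype.val).sum = d + 1 := by
            simp only [List.map_cons, List.sum_cons] at hsum ⊢
            omega
          rwa [hl, hsum'] at h3
        · simp only [hfun, hp, if_false]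
          exact Submodule.zero_mem _
  exact hle hx

include hmul hγ in
lemma homotopy (s d : ℕ) (hs : 1 ≤ s) (x : Gam) (hx : x ∈ GammaSD s d) :
    Sq1 (H x) + H (Sq1 x) = x := by
  have hle : GammaSD s d ≤ LinearMap.eqLocus (Sq1 ∘ₗ H + H ∘ₗ Sq1) LinearMap.id := by
    rw [GammaSD_eq, Submodule.span_le]
    rintro x ⟨M, hlen, hsum, rfl⟩
    simp only [SetLike.mem_coe, LinearMap.mem_eqLocus, LinearMap.add_apply,
      LinearMap.comp_apply, LinearMap.id_apply]
    cases M with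
    | nil => exfalso; simp at hlen; omega
    | cons a t =>
        rw [mon_cons]
        by_cases hp : a.1 % 2 = 1
        · rw [H_mul_odd a.1 hp (mon t)]
          rw [hmul, Sq1_γ_even Sq1 hγ (a.1 + 1) (by omega) (by omega)]
          have h1 : a.1 + 1 - 1 = a.1 := by omega
          rw [h1]
          rw [hmul, Sq1_γ_odd Sq1 hγ a.1 hp, zero_mul, add_zero]
          rw [H_mul_odd a.1 hp (Sq1 (mon t))]
          rw [add_comm (γ (a.1 + 1) * Sq1 (mon t)) (γ a.1 * mon t), add_assoc,
            two_eq_zero, add_zero]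
        · have hp0 : a.1 % 2 = 0 := by omega
          rw [H_mul_even a.1 a.2 hp0 (mon t), map_zero, zero_add]
          rw [hmul, Sq1_γ_even Sq1 hγ a.1 a.2 hp0, map_add]
          rw [H_mul_even a.1 a.2 hp0 (Sq1 (mon t)), zero_add]
          have h1 : (a.1 - 1) % 2 = 1 := by
            have := a.2; omega
          rw [H_mul_odd (a.1 - 1) h1 (mon t)]
          have h2 : a.1 - 1 + 1 = a.1 := by have := a.2; omega
          rw [h2]
  have h := hle hx
  rw [LinearMap.mem_eqLocus] at h
  simpa using h

end WithSq1

/-! ### Dimension counting -/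

open Finset in
def PFin (s n : ℕ) : Finset (Fin s → ℕ) :=
  (Finset.piAntidiag (univ : Finset (Fin s)) n).filter (fun f => ∀ i, 1 ≤ f i)

open Finset in
lemma mem_PFin {s n : ℕ} {f : Fin s → ℕ} :
    f ∈ PFin s n ↔ (∑ i, f i) = n ∧ ∀ i, 1 ≤ f i := by
  simp [PFin, Finset.mem_piAntidiag]

open Finset in
lemma card_piAntidiag_univ (s m : ℕ) :
    ((univ : Finset (Fin s)).piAntidiag m).card = (s + m - 1).choose m := by
  rw [← Finset.map_sym_eq_piAntidiag, Finset.card_map, Finset.sym_univ]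
  have h1 : (univ : Finset (Sym (Fin s) m)).card = Fintype.card (Sym (Fin s) m) :=
    Finset.card_univ
  rw [h1, Sym.card_sym_eq_choose, Fintype.card_fin]

open Finset in
lemma card_PFin (s n : ℕ) (hs : 1 ≤ s) (hn : 1 ≤ n) :
    (PFin s n).card = (n - 1).choose (s - 1) := by
  by_cases hle : s ≤ n
  · have key : (PFin s n).card = ((univ : Finset (Fin s)).piAntidiag (n - s)).card := by
      apply Finset.card_nbij' (i := fun f k => f k - 1) (j := fun g k => g k + 1)
      · intro f hf
        rw [Finset.mem_coe, mem_PFin] at hf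
        simp only [Finset.mem_coe, Finset.mem_piAntidiag]
        constructor
        · rw [Finset.sum_tsub_distrib _ (fun i _ => hf.2 i)]
          simp [hf.1]
        · intro i _; exact Finset.mem_univ i
      · intro g hg
        simp only [Finset.mem_coe, Finset.mem_piAntidiag] at hg
        rw [Finset.mem_coe, mem_PFin]
        constructor
        · have : (∑ i, (g i + 1)) = (∑ i, g i) + s := by
            rw [Finset.sum_add_distrib]
            simp
          rw [this, hg.1]
          omega
        · intro i; show 1 ≤ g i + 1; omega
      · intro f hf
        rw [Finset.mem_coe, mem_PFin] at hf
        funext k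
        show (f k - 1) + 1 = f k
        have := hf.2 k
        omega
      · intro g _
        funext k
        show (g k + 1) - 1 = g k
        omega
    rw [key, card_piAntidiag_univ]
    have h2 : s + (n - s) - 1 = n - 1 := by omega
    rw [h2]
    have h3 : n - s = (n - 1) - (s - 1) := by omega
    rw [h3, Nat.choose_symm (by omega)]
  · have hempty : PFin s n = ∅ := by
      apply Finset.eq_empty_of_forall_notMem
      intro f hf
      rw [mem_PFin] at hf
      have : (s : ℕ) ≤ ∑ i, f i := by
        calc (s : ℕ) = ∑ _i : Fin s, 1 := by simp
        _ ≤ ∑ i, f i := Finset.sum_le_sum (fun i _ => hf.2 i)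
      omega
    rw [hempty]
    simp only [Finset.card_empty]
    symm
    apply Nat.choose_eq_zero_of_lt
    omega

/-- list-indexed version of the monomial set -/
def J (s d : ℕ) : Type := {M : List X // M.length = s ∧ (M.map Subtype.val).sum = d}

lemma sum_fin_of_list (M : List X) {s : ℕ} (h : M.length = s) :
    ∑ i : Fin s, (M.get (Fin.cast h.symm i)).1 = (M.map Subtype.val).sum := by
  subst h
  simp only [Fin.cast_refl, id
]
  rw [← List.sum_ofFn]
  congr 1
  apply List.ext_get (by simp)
  intro i h1 h2
  simp [List.get_ofFn]

def JEquiv (s d : ℕ) : J s d ≃ {f : Fin s → ℕ // f ∈ PFin s d} where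
  toFun M := ⟨fun i => (M.1.get (Fin.cast M.2.1.symm i)).1, by
    rw [mem_PFin]
    refine ⟨?_, fun i => (M.1.get _).2⟩
    rw [sum_fin_of_list M.1 M.2.1, M.2.2]⟩
  invFun f := ⟨List.ofFn (fun i => (⟨f.1 i, (mem_PFin.mp f.2).2 i⟩ : X)), by
    constructor
    · simp
    · rw [List.map_ofFn, List.sum_ofFn]
      simp only [Function.comp]
      exact (mem_PFin.mp f.2).1⟩
  left_inv M := by
    apply Subtype.ext
    apply List.ext_get
    · simp [M.2.1]
    · intro i h1 h2
      simp [List.get_ofFn]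
  right_inv f := by
    apply Subtype.ext
    funext i
    simp [List.get_ofFn]

instance (s d : ℕ) : Fintype (J s d) := Fintype.ofEquiv _ (JEquiv s d).symm

lemma card_J (s d : ℕ) : Fintype.card (J s d) = (PFin s d).card := by
  rw [Fintype.card_congr (JEquiv s d), Fintype.card_coe]

def v (s d : ℕ) : J s d → Gam := fun M => mon M.1

lemma v_li (s d : ℕ) : LinearIndependent F (v s d) := by
  have : v s d = B ∘ (fun M : J s d => FreeMonoid.ofList M.1) := by
    funext M
    simp [v, B_ofList]
  rw [this]
  apply B.linearIndependent.comp
  intro M N h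
  apply Subtype.ext
  have h2 := congrArg FreeMonoid.toList h
  simpa [FreeMonoid.toList_ofList] using h2

lemma GammaSD_eq_span_range (s d : ℕ) :
    GammaSD s d = Submodule.span F (Set.range (v s d)) := by
  rw [GammaSD_eq]
  congr 1
  ext x
  constructor
  · rintro ⟨M, hlen, hsum, rfl⟩
    exact ⟨⟨M, hlen, hsum⟩, rfl⟩
  · rintro ⟨⟨M, hlen, hsum⟩, rfl⟩
    exact ⟨M, hlen, hsum, rfl⟩

lemma fd_GammaSD (s d : ℕ) : FiniteDimensional F (GammaSD s d) := by
  rw [GammaSD_eq_span_range]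
  exact FiniteDimensional.span_of_finite F (Set.finite_range _)

lemma finrank_GammaSD (s d : ℕ) :
    Module.finrank F (GammaSD s d) = (PFin s d).card := by
  rw [GammaSD_eq_span_range, finrank_span_eq_card (v_li s d), card_J]

end CdimAux

/-- For s ≥ 1 and d ≥ 0: c_{s,d} + c_{s,d+1} = dim Γ̃_{s,d+1} = binomial(d, s-1).
Here Sq¹ is (any) 𝔽₂-linear derivation on Γ̃ with (γ_j)Sq¹ = γ_{j-1} for j even
and 0 for j odd. -/
theorem cdim_reduction
    (Sq1 : Gam →ₗ[ZMod 2] Gam)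
    (hmul : ∀ x y : Gam, Sq1 (x * y) = x * Sq1 y + Sq1 x * y)
    (hγ : ∀ j : ℕ, 1 ≤ j → Sq1 (γ j) = if j % 2 = 0 then γ (j - 1) else 0)
    (s d : ℕ) (hs : 1 ≤ s) :
    cdim Sq1 s d + cdim Sq1 s (d + 1) = Module.finrank (ZMod 2) ↥(GammaSD s (d + 1)) ∧
    cdim Sq1 s d + cdim Sq1 s (d + 1) = Nat.choose d (s - 1) := by
  classical
  open CdimAux in
  have hfd : FiniteDimensional F (GammaSD s (d + 1)) := fd_GammaSD s (d + 1)
  let f : (GammaSD s (d + 1)) →ₗ[F] Gam := Sq1 ∘ₗ (GammaSD s (d + 1)).subtype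
  have hrange : LinearMap.range f = LinearMap.ker Sq1 ⊓ GammaSD s d := by
    apply le_antisymm
    · rintro _ ⟨x, rfl⟩
      simp only [LinearMap.comp_apply, Submodule.coe_subtype, f]
      refine Submodule.mem_inf.mpr ⟨?_, ?_⟩
      · simp only [LinearMap.mem_ker]
        exact Sq1Sq1_mem Sq1 hmul hγ s (d + 1) x.1 x.2
      · exact Sq1_mem Sq1 hmul hγ s d x.1 x.2
    · rintro y hy
      obtain ⟨hk, hyV⟩ := Submodule.mem_inf.mp hy
      have hid := homotopy Sq1 hmul hγ s d hs y hyV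
      rw [LinearMap.mem_ker.mp hk, map_zero, add_zero] at hid
      exact ⟨⟨H y, H_mem s d y hyV⟩, hid⟩
  have hker : LinearMap.ker f =
      (LinearMap.ker Sq1 ⊓ GammaSD s (d + 1)).comap (GammaSD s (d + 1)).subtype := by
    ext x
    simp only [LinearMap.mem_ker, LinearMap.comp_apply, Submodule.coe_subtype,
      Submodule.mem_comap, Submodule.mem_inf, f]
    exact ⟨fun h => ⟨h, x.2⟩, fun h => h.1⟩
  have h1 : cdim Sq1 s d = Module.finrank F (LinearMap.range f) := by
    rw [hrange]; rfl
  have h2 : cdim Sq1 s (d + 1) = Module.finrank F (LinearMap.ker f) := by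
    rw [hker]
    exact (LinearEquiv.finrank_eq
      (Submodule.comapSubtypeEquivOfLe inf_le_right)).symm
  have hmain : cdim Sq1 s d + cdim Sq1 s (d + 1)
      = Module.finrank F (GammaSD s (d + 1)) := by
    rw [h1, h2]
    exact LinearMap.finrank_range_add_finrank_ker f
  refine ⟨hmain, ?_⟩
  rw [hmain, CdimAux.finrank_GammaSD, CdimAux.card_PFin s (d + 1) hs (by omega)]
  simp

end
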